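/- arXiv:2012.15467 — 5 statements merged into one kernel-verified Lean document; each statement's English description precedes it below -/
import Mathlib

section
/- Let a be a random vector in ℝ^n with i.i.d. standard Gaussian entries, and let X = xx^T, Z = zz^T be rank-one symmetric positive semidefinite matrices. Then E[⟨aa^T, Z − X⟩²] = 2‖Z − X‖_F² + (‖Z‖_F − ‖X‖_F)², i.e., the population loss (1/2)·E[⟨aa^T, Z−X⟩²] equals (1/2)(‖Z‖_F − ‖X‖_F)² + ‖Z − X‖_F². -/
open MeasureTheory ProbabilityTheory Matrix Real
open scoped Matrix NNReal ENNReal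

attribute [local instance] Matrix.frobeniusNormedAddCommGroup

section GaussianMoments

lemma integrable_pow_mul_exp (k : ℕ) :
    Integrable (fun t : ℝ => t ^ k * Real.exp (-(2⁻¹ : ℝ) * t ^ 2)) := by
  have h := integrable_rpow_mul_exp_neg_mul_sq (b := (2⁻¹ : ℝ)) (by norm_num)
    (s := (k : ℝ)) (lt_of_lt_of_le neg_one_lt_zero (Nat.cast_nonneg k))
  simpa [Real.rpow_natCast] using h

noncomputable def gint (k : ℕ) : ℝ := ∫ t : ℝ, t ^ k * Real.exp (-(2⁻¹ : ℝ) * t ^ 2)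

lemma gint_zero : gint 0 = Real.sqrt (2 * π) := by
  have h := integral_gaussian (2⁻¹ : ℝ)
  simp only [gint, pow_zero, one_mul]
  rw [h]
  rw [show (π / 2⁻¹ : ℝ) = 2 * π by ring]

lemma gint_odd (k : ℕ) (hk : Odd k) : gint k = 0 := by
  have h := integral_neg_eq_self
    (fun t : ℝ => t ^ k * Real.exp (-(2⁻¹ : ℝ) * t ^ 2)) volume
  have h2 : (∫ t : ℝ, (-t) ^ k * Real.exp (-(2⁻¹ : ℝ) * (-t) ^ 2)) = - gint k := by
    rw [show (fun t : ℝ => (-t) ^ k * Real.exp (-(2⁻¹ : ℝ) * (-t) ^ 2))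
        = fun t : ℝ => -(t ^ k * Real.exp (-(2⁻¹ : ℝ) * t ^ 2)) from ?_, integral_neg]
    · rfl
    funext t
    rw [hk.neg_pow, neg_sq, neg_mul]
  have h3 : - gint k = gint k := by rw [← h2]; exact h
  linarith

lemma gint_rec (k : ℕ) : gint (k + 2) = (k + 1) * gint k := by
  have hu : ∀ t : ℝ, HasDerivAt (fun t : ℝ => t ^ (k + 1))
      (((k : ℝ) + 1) * t ^ k) t := by
    intro t
    simpa using (hasDerivAt_pow (k + 1) t)
  have hv : ∀ t : ℝ, HasDerivAt (fun t : ℝ => -Real.exp (-(2⁻¹ : ℝ) * t ^ 2))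
      (t * Real.exp (-(2⁻¹ : ℝ) * t ^ 2)) t := by
    intro t
    have h1 : HasDerivAt (fun t : ℝ => -(2⁻¹ : ℝ) * t ^ 2) (-(2⁻¹ : ℝ) * (2 * t)) t := by
      simpa using (hasDerivAt_pow 2 t).const_mul (-(2⁻¹ : ℝ))
    have : HasDerivAt (fun t : ℝ => -Real.exp (-(2⁻¹ : ℝ) * t ^ 2))
        (-(Real.exp (-(2⁻¹ : ℝ) * t ^ 2) * (-(2⁻¹ : ℝ) * (2 * t)))) t := (h1.exp).neg
    convert this using 1
    ring
  have h := integral_mul_deriv_eq_deriv_mul_of_integrable (fun t _ => hu t) (fun t _ => hv t) ?_ ?_ ?_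
  · calc gint (k + 2) = ∫ t : ℝ, t ^ (k+1) * (t * Real.exp (-(2⁻¹:ℝ) * t ^ 2)) := by
          unfold gint; congr 1; funext t; ring
    _ = -∫ t : ℝ, ((k:ℝ)+1) * t ^ k * -Real.exp (-(2⁻¹:ℝ) * t ^ 2) := h
    _ = ((k:ℝ)+1) * gint k := by
          unfold gint
          rw [← integral_const_mul]
          rw [← integral_neg]
          congr 1; funext t; ring
  · have h2 := integrable_pow_mul_exp (k + 2)
    apply h2.congr
    filter_upwards with t
    show t ^ (k + 2) * _ = t ^ (k + 1) * (t * _)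
    ring
  · have h2 := ((integrable_pow_mul_exp k).const_mul (((k:ℝ)+1))).neg
    apply h2.congr
    filter_upwards with t
    show -(((k:ℝ)+1) * (t ^ k * _)) = ((k:ℝ)+1) * t ^ k * (-_)
    ring
  · have h2 := (integrable_pow_mul_exp (k + 1)).neg
    apply h2.congr
    filter_upwards with t
    show -(t ^ (k + 1) * _) = t ^ (k + 1) * (-_)
    ring

lemma pdf_smul (k : ℕ) (t : ℝ) :
    (Real.toNNReal (gaussianPDFReal 0 1 t)) • t ^ k
      = (Real.sqrt (2 * π))⁻¹ * (t ^ k * Real.exp (-(2⁻¹ : ℝ) * t ^ 2)) := by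
  rw [NNReal.smul_def, smul_eq_mul,
    Real.coe_toNNReal _ (gaussianPDFReal_nonneg 0 1 t)]
  simp only [gaussianPDFReal]
  push_cast
  rw [mul_one, sub_zero]
  rw [show -t ^ 2 / (2 * (1:ℝ)) = -(2⁻¹:ℝ) * t ^ 2 by ring]
  ring

lemma gmom_eq (k : ℕ) :
    ∫ t, t ^ k ∂(gaussianReal 0 1) = (Real.sqrt (2 * π))⁻¹ * gint k := by
  rw [gaussianReal_of_var_ne_zero _ one_ne_zero]
  rw [show gaussianPDF 0 1 = fun t => ((Real.toNNReal (gaussianPDFReal 0 1 t) : ℝ≥0) : ℝ≥0∞)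
      from rfl]
  rw [integral_withDensity_eq_integral_smul
    ((measurable_gaussianPDFReal 0 1).real_toNNReal)]
  simp_rw [pdf_smul]
  rw [integral_const_mul]
  rfl

lemma integrable_pow_gaussianReal (k : ℕ) :
    Integrable (fun t : ℝ => t ^ k) (gaussianReal 0 1) := by
  rw [gaussianReal_of_var_ne_zero _ one_ne_zero]
  rw [show gaussianPDF 0 1 = fun t => ((Real.toNNReal (gaussianPDFReal 0 1 t) : ℝ≥0) : ℝ≥0∞)
      from rfl]
  rw [integrable_withDensity_iff_integrable_smul
    ((measurable_gaussianPDFReal 0 1).real_toNNReal)]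
  have h := (integrable_pow_mul_exp k).const_mul ((Real.sqrt (2 * π))⁻¹)
  apply h.congr
  filter_upwards with t
  exact (pdf_smul k t).symm

noncomputable def gmom (k : ℕ) : ℝ := ∫ t, t ^ k ∂(gaussianReal 0 1)

lemma sqrt_two_pi_pos : (0:ℝ) < Real.sqrt (2 * π) :=
  Real.sqrt_pos.mpr (by positivity)

lemma gmom_zero : gmom 0 = 1 := by
  rw [gmom, gmom_eq, gint_zero, inv_mul_cancel₀ sqrt_two_pi_pos.ne']

lemma gmom_one : gmom 1 = 0 := by
  rw [gmom, gmom_eq, gint_odd 1 ⟨0, by ring⟩, mul_zero]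

lemma gmom_two : gmom 2 = 1 := by
  have h : gint 2 = Real.sqrt (2 * π) := by
    have := gint_rec 0
    rw [gint_zero] at this
    simpa using this
  rw [gmom, gmom_eq, h, inv_mul_cancel₀ sqrt_two_pi_pos.ne']

lemma gmom_three : gmom 3 = 0 := by
  rw [gmom, gmom_eq, gint_odd 3 ⟨1, by ring⟩, mul_zero]

lemma gmom_four : gmom 4 = 3 := by
  have h2 : gint 2 = Real.sqrt (2 * π) := by
    have := gint_rec 0
    rw [gint_zero] at this
    simpa using this
  have h4 : gint 4 = 3 * Real.sqrt (2 * π) := by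
    have := gint_rec 2
    rw [h2] at this
    norm_num at this
    rw [Real.sqrt_mul (by norm_num)]; exact this
  rw [gmom, gmom_eq, h4]
  field_simp

end GaussianMoments

section PiIntegrals

lemma integral_monomial (n : ℕ) (e : Fin n → ℕ) :
    ∫ a : Fin n → ℝ, ∏ m, a m ^ e m ∂(Measure.pi fun _ : Fin n => gaussianReal 0 1)
      = ∏ m, gmom (e m) := by
  letI : MeasureSpace ℝ := ⟨gaussianReal 0 1⟩
  haveI : SigmaFinite (volume : Measure ℝ) := inferInstanceAs (SigmaFinite (gaussianReal 0 1))
  have h := MeasureTheory.integral_fintype_prod_eq_prod (𝕜 := ℝ) (ι := Fin n)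
    (fun i (t : ℝ) => t ^ e i) (μ := fun _ => (volume : Measure ℝ))
  rw [show (Measure.pi fun _ : Fin n => gaussianReal 0 1) = (volume : Measure (Fin n → ℝ))
    from (volume_pi).symm]
  exact h

lemma integrable_monomial (n : ℕ) (e : Fin n → ℕ) :
    Integrable (fun a : Fin n → ℝ => ∏ m, a m ^ e m)
      (Measure.pi fun _ : Fin n => gaussianReal 0 1) := by
  letI : MeasureSpace ℝ := ⟨gaussianReal 0 1⟩
  haveI : SigmaFinite (volume : Measure ℝ) := inferInstanceAs (SigmaFinite (gaussianReal 0 1))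
  rw [show (Measure.pi fun _ : Fin n => gaussianReal 0 1) = (volume : Measure (Fin n → ℝ))
    from (volume_pi).symm]
  exact Integrable.fintype_prod (𝕜 := ℝ) (f := fun i (t : ℝ) => t ^ e i)
    (fun i => integrable_pow_gaussianReal (e i))

def e4 {n : ℕ} (i j k l : Fin n) : Fin n → ℕ := fun m =>
  (if i = m then 1 else 0) + (if j = m then 1 else 0)
    + (if k = m then 1 else 0) + (if l = m then 1 else 0)

lemma monomial_eq {n : ℕ} (i j k l : Fin n) (a : Fin n → ℝ) :
    a i * a j * a k * a l = ∏ m, a m ^ (e4 i j k l m) := by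
  have h1 : ∀ i : Fin n, (∏ m, a m ^ (if i = m then 1 else 0)) = a i := by
    intro i
    rw [Finset.prod_congr rfl (fun m _ => pow_ite (i = m) (a m) 1 0)]
    simp
  simp_rw [e4, pow_add, Finset.prod_mul_distrib, h1]

lemma prod_gmom_single {n : ℕ} (i : Fin n) (c : ℕ) :
    (∏ m, gmom (if i = m then c else 0)) = gmom c := by
  rw [Finset.prod_congr rfl (fun m _ => apply_ite gmom (i = m) c 0)]
  simp [gmom_zero]

lemma prod_gmom_pair {n : ℕ} (i k : Fin n) (h : i ≠ k) (c d : ℕ) :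
    (∏ m, gmom ((if i = m then c else 0) + (if k = m then d else 0)))
      = gmom c * gmom d := by
  have hpt : ∀ m, gmom ((if i = m then c else 0) + (if k = m then d else 0))
      = (if i = m then gmom c else 1) * (if k = m then gmom d else 1) := by
    intro m
    by_cases h1 : i = m <;> by_cases h2 : k = m
    · exact absurd (h1.trans h2.symm) h
    · simp [h1, h2, gmom_zero]
    · simp [h1, h2, gmom_zero]
    · simp [h1, h2, gmom_zero]
  rw [Finset.prod_congr rfl (fun m _ => hpt m), Finset.prod_mul_distrib]
  simp

set_option linter.unreachableTactic false
set_option linter.unusedTactic false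

lemma integral_quad {n : ℕ} (i j k l : Fin n) :
    ∫ a : Fin n → ℝ, a i * a j * a k * a l ∂(Measure.pi fun _ : Fin n => gaussianReal 0 1)
      = (if i = j then (1:ℝ) else 0) * (if k = l then 1 else 0)
        + (if i = k then (1:ℝ) else 0) * (if j = l then 1 else 0)
        + (if i = l then (1:ℝ) else 0) * (if j = k then 1 else 0) := by
  simp_rw [monomial_eq i j k l]
  rw [integral_monomial]
  by_cases hij : i = j
  · subst hij
    by_cases hik : i = k
    · subst hik
      by_cases hil : i = l
      · subst hil
        rw [Finset.prod_congr rfl (fun m _ => show gmom (e4 i i i i m)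
            = gmom (if i = m then 4 else 0) by
          unfold e4; congr 1; by_cases h1 : i = m <;> simp [h1] <;> omega)]
        rw [prod_gmom_single, gmom_four]
        norm_num
      · rw [Finset.prod_eq_zero (Finset.mem_univ l) (show gmom (e4 i i i l l) = 0 by
          unfold e4; simp [hil, gmom_one])]
        simp [hil]
    · by_cases hkl : k = l
      · subst hkl
        rw [Finset.prod_congr rfl (fun m _ => show gmom (e4 i i k k m)
            = gmom ((if i = m then 2 else 0) + (if k = m then 2 else 0)) by
          unfold e4; congr 1; by_cases h1 : i = m <;> by_cases h2 : k = m <;> simp [h1, h2] <;> omega)]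
        rw [prod_gmom_pair i k hik, gmom_two]
        simp [hik]
      · by_cases hil : i = l
        · have hlk : ¬ l = k := fun h => hkl h.symm
          rw [Finset.prod_eq_zero (Finset.mem_univ k) (show gmom (e4 i i k l k) = 0 by
            unfold e4; simp [hik, hlk, gmom_one])]
          simp [hkl, hik, hil, hlk]
        · rw [Finset.prod_eq_zero (Finset.mem_univ l) (show gmom (e4 i i k l l) = 0 by
            unfold e4; simp [hil, hkl, gmom_one])]
          simp [hkl, hik, hil]
  · by_cases hik : i = k
    · subst hik
      by_cases hjl : j = l
      · subst hjl
        rw [Finset.prod_congr rfl (fun m _ => show gmom (e4 i j i j m)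
            = gmom ((if i = m then 2 else 0) + (if j = m then 2 else 0)) by
          unfold e4; congr 1; by_cases h1 : i = m <;> by_cases h2 : j = m <;> simp [h1, h2] <;> omega)]
        rw [prod_gmom_pair i j hij, gmom_two]
        simp [hij]
      · have hji : ¬ j = i := fun h => hij h.symm
        have hlj : ¬ l = j := fun h => hjl h.symm
        rw [Finset.prod_eq_zero (Finset.mem_univ j) (show gmom (e4 i j i l j) = 0 by
          unfold e4; simp [hij, hlj, gmom_one])]
        simp [hij, hjl, hji, hlj]
    · by_cases hil : i = l
      · subst hil
        by_cases hjk : j = k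
        · subst hjk
          rw [Finset.prod_congr rfl (fun m _ => show gmom (e4 i j j i m)
              = gmom ((if i = m then 2 else 0) + (if j = m then 2 else 0)) by
            unfold e4; congr 1; by_cases h1 : i = m <;> by_cases h2 : j = m <;> simp [h1, h2] <;> omega)]
          rw [prod_gmom_pair i j hij, gmom_two]
          simp [hij, hik]
        · have hji : ¬ j = i := fun h => hij h.symm
          have hkj : ¬ k = j := fun h => hjk h.symm
          rw [Finset.prod_eq_zero (Finset.mem_univ j) (show gmom (e4 i j k i j) = 0 by
            unfold e4; simp [hij, hkj, gmom_one])]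
          simp [hij, hik, hjk, hji, hkj]
      · have hji : ¬ j = i := fun h => hij h.symm
        have hki : ¬ k = i := fun h => hik h.symm
        have hli : ¬ l = i := fun h => hil h.symm
        rw [Finset.prod_eq_zero (Finset.mem_univ i) (show gmom (e4 i j k l i) = 0 by
          unfold e4; simp [hji, hki, hli, gmom_one])]
        simp [hij, hik, hil]

end PiIntegrals

section Norms

lemma frob_sq {n : ℕ} (M : Matrix (Fin n) (Fin n) ℝ) :
    ‖M‖ ^ 2 = ∑ i, ∑ j, (M i j) ^ 2 := by
  have h0 : (0:ℝ) ≤ ∑ i, ∑ j, ‖M i j‖ ^ (2:ℝ) := by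
    apply Finset.sum_nonneg; intro i _; apply Finset.sum_nonneg; intro j _
    positivity
  rw [Matrix.frobenius_norm_def, ← Real.rpow_natCast _ 2, ← Real.rpow_mul h0]
  norm_num

lemma outer_norm {n : ℕ} (u : Fin n → ℝ) :
    ‖(Matrix.of fun i j => u i * u j : Matrix (Fin n) (Fin n) ℝ)‖ = ∑ i, u i ^ 2 := by
  have h := frob_sq (Matrix.of fun i j => u i * u j : Matrix (Fin n) (Fin n) ℝ)
  have h2 : ∑ i, ∑ j, ((Matrix.of fun i j => u i * u j : Matrix (Fin n) (Fin n) ℝ) i j) ^ 2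
      = (∑ i, u i ^ 2) ^ 2 := by
    rw [sq (∑ i, u i ^ 2), Finset.sum_mul_sum]
    congr 1; funext i; congr 1; funext j
    simp [Matrix.of_apply]; ring
  rw [h2] at h
  have h3 : ‖(Matrix.of fun i j => u i * u j : Matrix (Fin n) (Fin n) ℝ)‖
      = Real.sqrt (‖(Matrix.of fun i j => u i * u j : Matrix (Fin n) (Fin n) ℝ)‖ ^ 2) :=
    (Real.sqrt_sq (norm_nonneg _)).symm
  rw [h3, h, Real.sqrt_sq]
  apply Finset.sum_nonneg; intro i _; positivity

lemma sum_eval {n : ℕ} (M : Matrix (Fin n) (Fin n) ℝ) :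
    ∑ p : Fin n × Fin n, ∑ q : Fin n × Fin n, M p.1 p.2 * M q.1 q.2 *
      ((if p.1 = p.2 then (1:ℝ) else 0) * (if q.1 = q.2 then 1 else 0)
        + (if p.1 = q.1 then (1:ℝ) else 0) * (if p.2 = q.2 then 1 else 0)
        + (if p.1 = q.2 then (1:ℝ) else 0) * (if p.2 = q.1 then 1 else 0))
    = (∑ i, M i i) ^ 2 + (∑ i, ∑ j, M i j ^ 2) + (∑ i, ∑ j, M i j * M j i) := by
  simp_rw [Fintype.sum_prod_type]
  simp only [mul_add, mul_ite, ite_mul, mul_one, one_mul, mul_zero, zero_mul,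
    Finset.sum_add_distrib, Finset.sum_ite_eq, Finset.sum_ite_eq', Finset.sum_ite_irrel,
    Finset.sum_const_zero, Finset.mem_univ, if_true, add_zero, zero_add]
  rw [sq (∑ i, M i i), Finset.sum_mul_sum]
  simp_rw [← sq]

end Norms

/-- Population loss of real Gaussian phase retrieval: if `a` has i.i.d. standard Gaussian
entries and `X = xxᵀ`, `Z = zzᵀ`, then
`E[⟨aaᵀ, Z - X⟩²] = 2‖Z - X‖_F² + (‖Z‖_F - ‖X‖_F)²`. -/
theorem stmt1 (n : ℕ) (x z : Fin n → ℝ) :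
    let X : Matrix (Fin n) (Fin n) ℝ := Matrix.of fun i j => x i * x j
    let Z : Matrix (Fin n) (Fin n) ℝ := Matrix.of fun i j => z i * z j
    (∫ a : Fin n → ℝ,
        (Matrix.trace ((Matrix.of fun i j : Fin n => a i * a j)ᵀ * (Z - X))) ^ 2
        ∂(Measure.pi fun _ : Fin n => gaussianReal 0 1))
      = 2 * ‖Z - X‖ ^ 2 + (‖Z‖ - ‖X‖) ^ 2 := by
  intro X Z
  have hM : ∀ i j : Fin n, (Z - X) i j = z i * z j - x i * x j := by
    intro i j
    rw [Matrix.sub_apply]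
    rfl
  have htr : ∀ a : Fin n → ℝ,
      Matrix.trace ((Matrix.of fun i j : Fin n => a i * a j)ᵀ * (Z - X))
        = ∑ p : Fin n × Fin n, a p.1 * a p.2 * (Z - X) p.1 p.2 := by
    intro a
    rw [Fintype.sum_prod_type]
    simp only [Matrix.trace, Matrix.diag_apply, Matrix.mul_apply, Matrix.transpose_apply,
      Matrix.of_apply]
    rw [Finset.sum_comm]
  have hint : ∀ p q : Fin n × Fin n,
      Integrable (fun a : Fin n → ℝ =>
          (a p.1 * a p.2 * (Z - X) p.1 p.2) * (a q.1 * a q.2 * (Z - X) q.1 q.2))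
        (Measure.pi fun _ : Fin n => gaussianReal 0 1) := by
    intro p q
    have h := (integrable_monomial n (e4 p.1 p.2 q.1 q.2)).const_mul
      ((Z - X) p.1 p.2 * (Z - X) q.1 q.2)
    apply h.congr
    filter_upwards with a
    rw [← monomial_eq]
    ring
  have hZn : ‖Z‖ = ∑ i, z i ^ 2 := outer_norm z
  have hXn : ‖X‖ = ∑ i, x i ^ 2 := outer_norm x
  calc (∫ a : Fin n → ℝ,
        (Matrix.trace ((Matrix.of fun i j : Fin n => a i * a j)ᵀ * (Z - X))) ^ 2
        ∂(Measure.pi fun _ : Fin n => gaussianReal 0 1))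
      = ∫ a : Fin n → ℝ, ∑ p : Fin n × Fin n, ∑ q : Fin n × Fin n,
          (a p.1 * a p.2 * (Z - X) p.1 p.2) * (a q.1 * a q.2 * (Z - X) q.1 q.2)
          ∂(Measure.pi fun _ : Fin n => gaussianReal 0 1) := by
        apply integral_congr_ae
        filter_upwards with a
        rw [htr a, sq, Finset.sum_mul_sum]
    _ = ∑ p : Fin n × Fin n, ∑ q : Fin n × Fin n, ∫ a : Fin n → ℝ,
          (a p.1 * a p.2 * (Z - X) p.1 p.2) * (a q.1 * a q.2 * (Z - X) q.1 q.2)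
          ∂(Measure.pi fun _ : Fin n => gaussianReal 0 1) := by
        rw [integral_finset_sum _ (fun p _ => integrable_finset_sum _ (fun q _ => hint p q))]
        apply Finset.sum_congr rfl; intro p _
        rw [integral_finset_sum _ (fun q _ => hint p q)]
    _ = ∑ p : Fin n × Fin n, ∑ q : Fin n × Fin n, (Z - X) p.1 p.2 * (Z - X) q.1 q.2 *
          ((if p.1 = p.2 then (1:ℝ) else 0) * (if q.1 = q.2 then 1 else 0)
            + (if p.1 = q.1 then (1:ℝ) else 0) * (if p.2 = q.2 then 1 else 0)
            + (if p.1 = q.2 then (1:ℝ) else 0) * (if p.2 = q.1 then 1 else 0)) := by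
        apply Finset.sum_congr rfl; intro p _
        apply Finset.sum_congr rfl; intro q _
        rw [show (fun a : Fin n → ℝ =>
            (a p.1 * a p.2 * (Z - X) p.1 p.2) * (a q.1 * a q.2 * (Z - X) q.1 q.2))
            = fun a : Fin n → ℝ => ((Z - X) p.1 p.2 * (Z - X) q.1 q.2)
              * (a p.1 * a p.2 * a q.1 * a q.2) from by funext a; ring]
        rw [MeasureTheory.integral_const_mul, integral_quad]
    _ = (∑ i, (Z - X) i i) ^ 2 + (∑ i, ∑ j, (Z - X) i j ^ 2)
          + (∑ i, ∑ j, (Z - X) i j * (Z - X) j i) := sum_eval (Z - X)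
    _ = 2 * ‖Z - X‖ ^ 2 + (‖Z‖ - ‖X‖) ^ 2 := by
        rw [hZn, hXn, frob_sq (Z - X)]
        simp only [hM]
        have hd : ∑ i, (z i * z i - x i * x i) = (∑ i, z i ^ 2) - ∑ i, x i ^ 2 := by
          rw [← Finset.sum_sub_distrib]
          apply Finset.sum_congr rfl; intros; ring
        have hsym : ∑ i, ∑ j, ((z i * z j - x i * x j) * (z j * z i - x j * x i))
            = ∑ i, ∑ j, (z i * z j - x i * x j) ^ 2 := by
          apply Finset.sum_congr rfl; intro i _
          apply Finset.sum_congr rfl; intro j _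
          ring
        rw [hd, hsym]
        ring
end

section
/- Let Z, Z' be n×n normal matrices (over ℝ or ℂ) with eigenvalues {λ_j} and {λ'_j} suitably ordered. Then there is an ordering (a permutation matching) such that √(Σ_{j=1}^n |λ'_j − λ_j|²) ≤ ‖Z' − Z‖_F. -/
/-!
Put `W = Vᴴ U`. Then `Z' - Z = V (Λ' W - W Λ) Uᴴ`, and since the Frobenius norm is unitarily
invariant, `‖Z' - Z‖² = ∑ i j, |λ'ᵢ - λⱼ|² |Wᵢⱼ|²`. The matrix `(|Wᵢⱼ|²)` is doubly stochastic, so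
by Birkhoff's theorem it lies in the convex hull of the permutation matrices, and the linear
functional `S ↦ ∑ i j, |λ'ᵢ - λⱼ|² Sᵢⱼ` attains its minimum there at a permutation matrix.
-/

open scoped Matrix

attribute [local instance] Matrix.frobeniusNormedAddCommGroup

theorem exists_perm_sum_le_of_mem_doublyStochastic {R n : Type*} [Field R] [LinearOrder R]
    [IsStrictOrderedRing R] [Fintype n] [DecidableEq n] {S : Matrix n n R}
    (hS : S ∈ doublyStochastic R n) (c : Matrix n n R) :
    ∃ σ : Equiv.Perm n, ∑ j, c (σ j) j ≤ ∑ i, ∑ j, c i j * S i j := by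
  let f : Matrix n n R →ₗ[R] R := ∑ i, ∑ j, c i j • Matrix.entryLinearMap R R i j
  have hf : ∀ M, f M = ∑ i, ∑ j, c i j * M i j := by simp [f]
  rw [← SetLike.mem_coe, doublyStochastic_eq_convexHull_permMatrix] at hS
  obtain ⟨_, ⟨σ, rfl⟩, hσ⟩ :=
    (f.concaveOn convex_univ).exists_le_of_mem_convexHull (Set.subset_univ _) hS
  refine ⟨σ.symm, ?_⟩
  rw [hf, hf, Finset.sum_comm] at hσ
  simpa [Equiv.toPEquiv_apply, ← Equiv.eq_symm_apply] using hσ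

namespace Matrix

variable {𝕜 m n : Type*} [RCLike 𝕜] [Fintype m] [Fintype n]

theorem frobenius_norm_sq (A : Matrix m n 𝕜) : ‖A‖ ^ 2 = ∑ i, ∑ j, ‖A i j‖ ^ 2 := by
  rw [frobenius_norm_def, ← Real.sqrt_eq_rpow, Real.sq_sqrt (by positivity)]
  simp

theorem frobenius_norm_sq_eq_re_trace (A : Matrix m n 𝕜) :
    ‖A‖ ^ 2 = RCLike.re (Aᴴ * A).trace := by
  rw [frobenius_norm_sq, trace, Finset.sum_comm]
  simp [mul_apply, RCLike.conj_mul]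

theorem frobenius_norm_sq_diagonal_mul_sub_mul_diagonal [DecidableEq m] [DecidableEq n]
    (a : m → 𝕜) (b : n → 𝕜) (W : Matrix m n 𝕜) :
    ‖diagonal a * W - W * diagonal b‖ ^ 2 = ∑ i, ∑ j, ‖a i - b j‖ ^ 2 * ‖W i j‖ ^ 2 := by
  simp [frobenius_norm_sq, mul_comm (W _ _), ← sub_mul, norm_mul, mul_pow]

theorem frobenius_norm_unitary_mul [DecidableEq m] {U : Matrix m m 𝕜}
    (hU : U ∈ unitaryGroup m 𝕜) (A : Matrix m n 𝕜) : ‖U * A‖ = ‖A‖ := by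
  have hUU : Uᴴ * U = 1 := hU.1
  rw [← sq_eq_sq₀ (norm_nonneg _) (norm_nonneg _), frobenius_norm_sq_eq_re_trace,
    frobenius_norm_sq_eq_re_trace, conjTranspose_mul, Matrix.mul_assoc,
    ← Matrix.mul_assoc Uᴴ, hUU, Matrix.one_mul]

variable [DecidableEq n]

theorem conjTranspose_mem_unitaryGroup {U : Matrix n n 𝕜} (hU : U ∈ unitaryGroup n 𝕜) :
    Uᴴ ∈ unitaryGroup n 𝕜 :=
  Unitary.star_mem hU

theorem frobenius_norm_mul_unitary {U : Matrix n n 𝕜} (hU : U ∈ unitaryGroup n 𝕜)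
    (A : Matrix m n 𝕜) : ‖A * U‖ = ‖A‖ := by
  rw [← frobenius_norm_conjTranspose, conjTranspose_mul,
    frobenius_norm_unitary_mul (conjTranspose_mem_unitaryGroup hU), frobenius_norm_conjTranspose]

theorem sum_norm_sq_row_of_mem_unitaryGroup {W : Matrix n n 𝕜} (hW : W ∈ unitaryGroup n 𝕜)
    (i : n) : ∑ j, ‖W i j‖ ^ 2 = 1 := by
  have hWW : W * Wᴴ = 1 := hW.2
  have h := congr_fun (congr_fun hWW i) i
  simp only [mul_apply, conjTranspose_apply, RCLike.star_def, RCLike.mul_conj, one_apply_eq] at h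
  exact_mod_cast h

theorem map_norm_sq_mem_doublyStochastic {W : Matrix n n 𝕜} (hW : W ∈ unitaryGroup n 𝕜) :
    W.map (‖·‖ ^ 2) ∈ doublyStochastic ℝ n := by
  refine mem_doublyStochastic_iff_sum.2 ⟨fun _ _ => by simp,
    sum_norm_sq_row_of_mem_unitaryGroup hW, fun j => ?_⟩
  simpa using sum_norm_sq_row_of_mem_unitaryGroup (conjTranspose_mem_unitaryGroup hW) j

end Matrix

/-- Hoffman–Wielandt theorem for normal matrices: if `Z = U diag(λ) Uᴴ` and
`Z' = V diag(λ') Vᴴ` with `U, V` unitary (i.e. `Z, Z'` are normal with eigenvalues `λ, λ'`),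
then there is a matching (permutation) `σ` with
`√(Σ_j |λ'_{σ j} - λ_j|²) ≤ ‖Z' - Z‖_F`. -/
theorem stmt5 (n : ℕ) (Z Z' U V : Matrix (Fin n) (Fin n) ℂ)
    (hU : U ∈ Matrix.unitaryGroup (Fin n) ℂ) (hV : V ∈ Matrix.unitaryGroup (Fin n) ℂ)
    (lam lam' : Fin n → ℂ)
    (hZ : Z = U * Matrix.diagonal lam * Uᴴ)
    (hZ' : Z' = V * Matrix.diagonal lam' * Vᴴ) :
    ∃ σ : Equiv.Perm (Fin n),
      Real.sqrt (∑ j, ‖lam' (σ j) - lam j‖ ^ 2) ≤ ‖Z' - Z‖ := by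
  set W := Vᴴ * U
  have hW : W ∈ Matrix.unitaryGroup (Fin n) ℂ :=
    mul_mem (Matrix.conjTranspose_mem_unitaryGroup hV) hU
  have hUU : U * Uᴴ = 1 := hU.2
  have hVV : V * Vᴴ = 1 := hV.2
  have hfactor : Z' - Z = V * (Matrix.diagonal lam' * W - W * Matrix.diagonal lam) * Uᴴ := by
    simp only [hZ, hZ', W, Matrix.mul_sub, Matrix.sub_mul, Matrix.mul_assoc, hUU, Matrix.mul_one]
    simp only [← Matrix.mul_assoc, hVV, Matrix.one_mul]
  have hnorm : ‖Z' - Z‖ = ‖Matrix.diagonal lam' * W - W * Matrix.diagonal lam‖ := by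
    rw [hfactor, Matrix.frobenius_norm_mul_unitary (Matrix.conjTranspose_mem_unitaryGroup hU),
      Matrix.frobenius_norm_unitary_mul hV]
  obtain ⟨σ, hσ⟩ := exists_perm_sum_le_of_mem_doublyStochastic
    (Matrix.map_norm_sq_mem_doublyStochastic hW) (fun i j => ‖lam' i - lam j‖ ^ 2)
  refine ⟨σ, Real.sqrt_le_iff.2 ⟨norm_nonneg _, ?_⟩⟩
  rw [hnorm, Matrix.frobenius_norm_sq_diagonal_mul_sub_mul_diagonal]
  exact hσ
end

section
/- Let X = UDV^H be a singular value decomposition of a rank-r matrix X, with a splitting U = (U₁,U₂), V = (V₁,V₂), D = diag(D₁,D₂). Then every matrix of the form Z* = U₁ D₁ V₁^H satisfies P_{T_{Z*}}(Z* − X) = 0, where P_{T_{Z*}} is the orthogonal projection onto the tangent space of the fixed-rank manifold at Z*. -/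
open scoped Matrix

/-- Spurious fixed points: let `X = U diag(D) Vᴴ` be an SVD of a rank-`r` matrix
(`Uᴴ U = 1`, `Vᴴ V = 1`, `D j ≠ 0`), and let `s` select a subset of the singular triplets.
Then `Z* = U₁ D₁ V₁ᴴ` (keeping only the triplets in `s`) satisfies `P_{T_{Z*}}(Z* - X) = 0`,
where `P_{T_{Z*}}(Y) = P_{U₁} Y + Y P_{V₁} - P_{U₁} Y P_{V₁}` is the orthogonal projection
onto the tangent space of the fixed-rank manifold at `Z*`. -/
theorem stmt9 (n₁ n₂ r : ℕ)
    (U : Matrix (Fin n₁) (Fin r) ℂ) (V : Matrix (Fin n₂) (Fin r) ℂ)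
    (hU : Uᴴ * U = 1) (hV : Vᴴ * V = 1)
    (D : Fin r → ℂ) (hD : ∀ j, D j ≠ 0)
    (s : Finset (Fin r))
    (X : Matrix (Fin n₁) (Fin n₂) ℂ) (hX : X = U * Matrix.diagonal D * Vᴴ) :
    let E : Matrix (Fin r) (Fin r) ℂ := Matrix.diagonal (fun j => if j ∈ s then 1 else 0)
    let Zs : Matrix (Fin n₁) (Fin n₂) ℂ :=
      U * Matrix.diagonal (fun j => if j ∈ s then D j else 0) * Vᴴ
    U * E * Uᴴ * (Zs - X) + (Zs - X) * (V * E * Vᴴ)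
      - U * E * Uᴴ * (Zs - X) * (V * E * Vᴴ) = 0 := by
  intro E Zs
  set G : Matrix (Fin r) (Fin r) ℂ :=
    Matrix.diagonal (fun j => (if j ∈ s then D j else 0) - D j) with hG
  have hdiff : Zs - X = U * G * Vᴴ := by
    show U * Matrix.diagonal (fun j => if j ∈ s then D j else 0) * Vᴴ - X = U * G * Vᴴ
    rw [hX, hG, ← Matrix.sub_mul, ← Matrix.mul_sub, ← Matrix.diagonal_sub]
  have hEG : E * G = 0 := by
    simp only [E, hG, Matrix.diagonal_mul_diagonal]
    ext i j
    by_cases h : i ∈ s <;> simp [Matrix.diagonal, h]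
  have hGE : G * E = 0 := by
    simp only [E, hG, Matrix.diagonal_mul_diagonal]
    ext i j
    by_cases h : i ∈ s <;> simp [Matrix.diagonal, h]
  have h1 : U * E * Uᴴ * (Zs - X) = 0 := by
    rw [hdiff]
    calc U * E * Uᴴ * (U * G * Vᴴ) = U * (E * ((Uᴴ * U) * (G * Vᴴ))) := by
          simp only [Matrix.mul_assoc]
      _ = U * (E * G) * Vᴴ := by simp only [hU, Matrix.one_mul, Matrix.mul_assoc]
      _ = 0 := by rw [hEG, Matrix.mul_zero, Matrix.zero_mul]
  have h2 : (Zs - X) * (V * E * Vᴴ) = 0 := by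
    rw [hdiff]
    calc U * G * Vᴴ * (V * E * Vᴴ) = U * (G * ((Vᴴ * V) * (E * Vᴴ))) := by
          simp only [Matrix.mul_assoc]
      _ = U * (G * E) * Vᴴ := by simp only [hV, Matrix.one_mul, Matrix.mul_assoc]
      _ = 0 := by rw [hGE, Matrix.mul_zero, Matrix.zero_mul]
  rw [h1, h2, Matrix.zero_mul]
  simp
end

section
/- Consider the planar ODE system h' = ρ − h, ρ' = (2ρ/h)(1 − ρ) on the region h > 0, 0 < ρ ≤ 1. Then: (i) ρ(t) is nondecreasing along trajectories; (ii) (h,ρ) = (1,1) is an equilibrium; (iii) if ρ(0) ≥ ρ₀ > 0 and h is bounded above by H on the trajectory, then ρ(t) ≥ min(1/2, ρ₀ e^{t/H}) for all t while ρ < 1/2, so ρ reaches 1/2 in time at most H·log(1/(2ρ₀)). -/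
open Real

/-- Exponential lower bound: if `f' ≥ c·f` on `[0,t]`, then `f t ≥ f 0 · e^{ct}`. -/
lemma exp_lower_aux (f : ℝ → ℝ) (c t : ℝ) (ht : 0 ≤ t)
    (hderiv : ∀ s ∈ Set.Icc (0:ℝ) t, ∃ d, HasDerivAt f d s ∧ c * f s ≤ d) :
    f 0 * Real.exp (c * t) ≤ f t := by
  set g : ℝ → ℝ := fun s => f s * Real.exp (-(c * s)) with hgdef
  have hgd : ∀ s ∈ Set.Icc (0:ℝ) t, ∃ d', HasDerivAt g d' s ∧ 0 ≤ d' := by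
    intro s hs
    obtain ⟨d, hd, hle⟩ := hderiv s hs
    have h1 : HasDerivAt (fun s : ℝ => -(c * s)) (-c) s := by
      simpa using ((hasDerivAt_id s).const_mul c).fun_neg
    have he : HasDerivAt (fun s : ℝ => Real.exp (-(c * s)))
        (Real.exp (-(c * s)) * (-c)) s := h1.exp
    refine ⟨_, hd.mul he, ?_⟩
    have hep := Real.exp_pos (-(c * s))
    nlinarith
  have hdiff : ∀ s ∈ Set.Icc (0:ℝ) t, DifferentiableAt ℝ g s :=
    fun s hs => ((hgd s hs).choose_spec.1).differentiableAt
  have hmono : MonotoneOn g (Set.Icc 0 t) := by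
    apply monotoneOn_of_deriv_nonneg (convex_Icc 0 t)
    · exact fun s hs => (hdiff s hs).continuousAt.continuousWithinAt
    · exact fun s hs => (hdiff s (interior_subset hs)).differentiableWithinAt
    · intro s hs
      obtain ⟨d', hd', h0⟩ := hgd s (interior_subset hs)
      rw [hd'.deriv]; exact h0
  have hg0t : g 0 ≤ g t :=
    hmono (Set.left_mem_Icc.2 ht) (Set.right_mem_Icc.2 ht) ht
  have hg0 : g 0 = f 0 := by simp [hgdef]
  rw [hg0] at hg0t
  calc f 0 * Real.exp (c * t)
      ≤ (f t * Real.exp (-(c * t))) * Real.exp (c * t) :=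
        mul_le_mul_of_nonneg_right hg0t (Real.exp_pos _).le
    _ = f t := by rw [mul_assoc, ← Real.exp_add]; simp

/-- The planar ODE system `h' = ρ - h`, `ρ' = (2ρ/h)(1 - ρ)` on `h > 0`, `0 < ρ ≤ 1`
(gradient flow of `F₁` on the rank-1 SPSD manifold): (i) `ρ` is nondecreasing;
(ii) `(h, ρ) = (1, 1)` is an equilibrium; (iii) if `ρ(0) ≥ ρ₀ > 0` and `h ≤ H` along the
trajectory, then `ρ(t) ≥ min(1/2, ρ₀ e^{t/H})`, so `ρ` reaches `1/2` in time at most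
`H log(1/(2ρ₀))`. -/
theorem stmt15 (h ρ : ℝ → ℝ)
    (hpos : ∀ t, 0 ≤ t → 0 < h t)
    (hρpos : ∀ t, 0 ≤ t → 0 < ρ t) (hρle : ∀ t, 0 ≤ t → ρ t ≤ 1)
    (hODEh : ∀ t, 0 ≤ t → HasDerivAt h (ρ t - h t) t)
    (hODEρ : ∀ t, 0 ≤ t → HasDerivAt ρ (2 * ρ t / h t * (1 - ρ t)) t) :
    MonotoneOn ρ (Set.Ici 0) ∧
    ((h 0 = 1 ∧ ρ 0 = 1) → ∀ t, 0 ≤ t → h t = 1 ∧ ρ t = 1) ∧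
    (∀ ρ₀ H : ℝ, 0 < ρ₀ → 0 < H → ρ₀ ≤ ρ 0 → (∀ t, 0 ≤ t → h t ≤ H) →
      (∀ t, 0 ≤ t → min (1 / 2) (ρ₀ * exp (t / H)) ≤ ρ t) ∧
      (∃ t, 0 ≤ t ∧ t ≤ max 0 (H * log (1 / (2 * ρ₀))) ∧ 1 / 2 ≤ ρ t)) := by
  -- Part (i): ρ is nondecreasing
  have hmonoρ : MonotoneOn ρ (Set.Ici 0) := by
    apply monotoneOn_of_deriv_nonneg (convex_Ici 0)
    · exact fun s hs => (hODEρ s hs).continuousAt.continuousWithinAt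
    · intro s hs
      have hs' : (0:ℝ) ≤ s := le_of_lt (by simpa [interior_Ici] using hs)
      exact (hODEρ s hs').differentiableAt.differentiableWithinAt
    · intro s hs
      have hs' : (0:ℝ) ≤ s := le_of_lt (by simpa [interior_Ici] using hs)
      rw [(hODEρ s hs').deriv]
      have h1 := hpos s hs'
      have h2 := hρpos s hs'
      have h3 := hρle s hs'
      have h4 : 0 ≤ 2 * ρ s / h s := by positivity
      exact mul_nonneg h4 (by linarith)
  refine ⟨hmonoρ, ?_, ?_⟩
  · -- Part (ii): equilibrium
    rintro ⟨hh0, hρ0⟩ t ht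
    have hρeq : ∀ s, 0 ≤ s → ρ s = 1 := by
      intro s hs
      refine le_antisymm (hρle s hs) ?_
      have := hmonoρ (Set.mem_Ici.2 le_rfl) (Set.mem_Ici.2 hs) hs
      rw [hρ0] at this; exact this
    have hupper : h t ≤ 1 := by
      have := exp_lower_aux (fun s => 1 - h s) (-1) t ht ?_
      · have hep := Real.exp_pos (-1 * t)
        rw [hh0] at this
        nlinarith
      · intro s hs
        refine ⟨-(ρ s - h s), (hODEh s hs.1).const_sub 1, ?_⟩
        rw [hρeq s hs.1]; ring_nf; linarith
    have hlower : 1 ≤ h t := by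
      have := exp_lower_aux (fun s => h s - 1) (-1) t ht ?_
      · have hep := Real.exp_pos (-1 * t)
        rw [hh0] at this
        nlinarith
      · intro s hs
        refine ⟨ρ s - h s, (hODEh s hs.1).sub_const 1, ?_⟩
        rw [hρeq s hs.1]; ring_nf; linarith
    exact ⟨le_antisymm hupper hlower, hρeq t ht⟩
  · -- Part (iii)
    intro ρ₀ H hρ₀ hH hle hbound
    have claimA : ∀ t, 0 ≤ t → min (1/2) (ρ₀ * Real.exp (t / H)) ≤ ρ t := by
      intro t ht
      by_cases hcase : ∀ s ∈ Set.Icc (0:ℝ) t, ρ s ≤ 1/2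
      · have key : ρ 0 * Real.exp ((1/H) * t) ≤ ρ t := by
          apply exp_lower_aux ρ (1/H) t ht
          intro s hs
          refine ⟨_, hODEρ s hs.1, ?_⟩
          have hρs := hρpos s hs.1
          have hhs := hpos s hs.1
          have hHs := hbound s hs.1
          have hhalf := hcase s hs
          have hd1 : 2 * ρ s / H ≤ 2 * ρ s / h s := by
            gcongr
          have hd2 : (1:ℝ)/2 ≤ 1 - ρ s := by linarith
          calc (1/H) * ρ s = (2 * ρ s / H) * (1/2) := by ring
            _ ≤ (2 * ρ s / h s) * (1 - ρ s) :=
                mul_le_mul hd1 hd2 (by norm_num) (by positivity)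
        have hfin : ρ₀ * Real.exp (t / H) ≤ ρ t := by
          have h0 : ρ₀ * Real.exp (t / H) ≤ ρ 0 * Real.exp ((1/H) * t) := by
            rw [show (1/H) * t = t / H by ring]
            exact mul_le_mul_of_nonneg_right hle (Real.exp_pos _).le
          linarith
        exact le_trans (min_le_right _ _) hfin
      · push_neg at hcase
        obtain ⟨s, hs, hs2⟩ := hcase
        have : (1:ℝ)/2 ≤ ρ t :=
          le_trans hs2.le (hmonoρ (Set.mem_Ici.2 hs.1) (Set.mem_Ici.2 ht) hs.2)
        exact le_trans (min_le_left _ _) this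
    refine ⟨fun t ht => claimA t ht, ?_⟩
    by_cases hbig : (1:ℝ)/2 ≤ ρ₀
    · exact ⟨0, le_rfl, le_max_left _ _, le_trans hbig hle⟩
    · push_neg at hbig
      set T := H * Real.log (1/(2*ρ₀)) with hTdef
      have hlogpos : 0 < Real.log (1/(2*ρ₀)) :=
        Real.log_pos ((one_lt_div (by positivity)).2 (by linarith))
      have hT : 0 ≤ T := le_of_lt (mul_pos hH hlogpos)
      have hTH : T / H = Real.log (1/(2*ρ₀)) := by
        rw [hTdef]; field_simp
      have hexp : Real.exp (T/H) = 1/(2*ρ₀) := by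
        rw [hTH, Real.exp_log (by positivity)]
      have hval : ρ₀ * Real.exp (T/H) = 1/2 := by
        rw [hexp]; field_simp
      refine ⟨T, hT, le_max_right _ _, ?_⟩
      have := claimA T hT
      rw [hval, min_self] at this
      exact this
end

section
/- Let R ∈ ℂ^{r×r} with R^H R ⪯ I_r (i.e., I − R^H R is positive semidefinite), and let D = diag(d₁,…,d_r) with d_j > 0. Write R = T₂ Σ_{RR}^{1/2} T₁^H (SVD) so that R^H R = T₁ Σ_{RR} T₁^H with eigenvalues r₁,…,r_r ∈ [0,1]. Then tr(R D (I − R^H R) D R^H) = tr(N Σ_{QQ} N Σ_{RR}) where N = T₁^H D T₁ and Σ_{QQ} = I − Σ_{RR}, and this quantity is at least Σ_j r_j(1 − r_j) N(j,j)² ≥ (min_j d_j)² · Σ_j r_j(1 − r_j). -/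
open scoped Matrix

/-- Key algebraic inequality for the column-space alignment dynamics: with
`RᴴR = T₁ diag(r_j) T₁ᴴ` (`T₁` unitary, `r_j ∈ [0,1]`) and `D = diag(d_j)`, `d_j > 0`,
one has `tr(R D (I - RᴴR) D Rᴴ) = tr(N Σ_QQ N Σ_RR)` where `N = T₁ᴴ D T₁`,
`Σ_RR = diag(r_j)`, `Σ_QQ = I - Σ_RR`, and this quantity is at least
`Σ_j r_j (1 - r_j) N(j,j)² ≥ (min_j d_j)² Σ_j r_j (1 - r_j)`. -/
theorem stmt18 (r : ℕ) (hr : 0 < r)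
    (R T₁ : Matrix (Fin r) (Fin r) ℂ)
    (hT₁ : T₁ ∈ Matrix.unitaryGroup (Fin r) ℂ)
    (rvals : Fin r → ℝ) (hrv0 : ∀ j, 0 ≤ rvals j) (hrv1 : ∀ j, rvals j ≤ 1)
    (d : Fin r → ℝ) (hd : ∀ j, 0 < d j)
    (hRR : Rᴴ * R = T₁ * Matrix.diagonal (fun j => (rvals j : ℂ)) * T₁ᴴ) :
    let D : Matrix (Fin r) (Fin r) ℂ := Matrix.diagonal (fun j => (d j : ℂ))
    let Srr : Matrix (Fin r) (Fin r) ℂ := Matrix.diagonal (fun j => (rvals j : ℂ))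
    let N : Matrix (Fin r) (Fin r) ℂ := T₁ᴴ * D * T₁
    Matrix.trace (R * D * (1 - Rᴴ * R) * D * Rᴴ)
      = Matrix.trace (N * (1 - Srr) * N * Srr) ∧
    (Matrix.trace (R * D * (1 - Rᴴ * R) * D * Rᴴ)).re
      ≥ ∑ j, rvals j * (1 - rvals j) * (N j j).re ^ 2 ∧
    (∑ j, rvals j * (1 - rvals j) * (N j j).re ^ 2)
      ≥ (⨅ j, d j) ^ 2 * ∑ j, rvals j * (1 - rvals j) := by
  intro D Srr N
  have h1 : T₁ * T₁ᴴ = 1 := by simpa [Matrix.star_eq_conjTranspose] using (Matrix.mem_unitaryGroup_iff.mp hT₁)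
  have h2 : T₁ᴴ * T₁ = 1 := by simpa [Matrix.star_eq_conjTranspose] using (Matrix.mem_unitaryGroup_iff'.mp hT₁)
  -- `1 - RᴴR = T₁ (1 - Srr) T₁ᴴ`
  have hI : (1 : Matrix (Fin r) (Fin r) ℂ) - Rᴴ * R = T₁ * (1 - Srr) * T₁ᴴ := by
    rw [hRR]
    calc (1 : Matrix (Fin r) (Fin r) ℂ) - T₁ * Matrix.diagonal (fun j => (rvals j : ℂ)) * T₁ᴴ
        = T₁ * T₁ᴴ - T₁ * Srr * T₁ᴴ := by rw [h1]
      _ = T₁ * (1 - Srr) * T₁ᴴ := by noncomm_ring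
  -- Trace identity
  have htr : Matrix.trace (R * D * (1 - Rᴴ * R) * D * Rᴴ)
      = Matrix.trace (N * (1 - Srr) * N * Srr) := by
    have e1 : Rᴴ * (R * D * (1 - Rᴴ * R) * D)
        = T₁ * (Srr * N * (1 - Srr) * (T₁ᴴ * D)) := by
      rw [hI]
      calc Rᴴ * (R * D * (T₁ * (1 - Srr) * T₁ᴴ) * D)
          = (Rᴴ * R) * (D * (T₁ * (1 - Srr) * T₁ᴴ) * D) := by noncomm_ring
        _ = (T₁ * Srr * T₁ᴴ) * (D * (T₁ * (1 - Srr) * T₁ᴴ) * D) := by rw [hRR]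
        _ = T₁ * (Srr * (T₁ᴴ * D * T₁) * (1 - Srr) * (T₁ᴴ * D)) := by noncomm_ring
    calc Matrix.trace (R * D * (1 - Rᴴ * R) * D * Rᴴ)
        = Matrix.trace (Rᴴ * (R * D * (1 - Rᴴ * R) * D)) := (Matrix.trace_mul_comm _ _)
      _ = Matrix.trace (T₁ * (Srr * N * (1 - Srr) * (T₁ᴴ * D))) := by rw [e1]
      _ = Matrix.trace ((Srr * N * (1 - Srr) * (T₁ᴴ * D)) * T₁) := Matrix.trace_mul_comm _ _
      _ = Matrix.trace (Srr * (N * (1 - Srr) * N)) := by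
          rw [show (Srr * N * (1 - Srr) * (T₁ᴴ * D)) * T₁
              = Srr * (N * (1 - Srr) * (T₁ᴴ * D * T₁)) by noncomm_ring]
      _ = Matrix.trace (N * (1 - Srr) * N * Srr) := by
          rw [Matrix.trace_mul_comm]
  -- entrywise computation of the trace
  have hsub : (1 : Matrix (Fin r) (Fin r) ℂ) - Srr
      = Matrix.diagonal (fun j => ((1 - rvals j : ℝ) : ℂ)) := by
    ext i j
    by_cases h : i = j
    · subst h; simp [Srr, Matrix.one_apply]
    · simp [Srr, Matrix.one_apply, Matrix.diagonal_apply_ne _ h, h]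
  have hNconj : ∀ j k, N k j = starRingEnd ℂ (N j k) := by
    intro j k
    have hH : Nᴴ = N := by
      show (T₁ᴴ * D * T₁)ᴴ = T₁ᴴ * D * T₁
      have hD : Dᴴ = D := by
        ext i j
        rcases eq_or_ne i j with h | h
        · subst h; simp [D]
        · simp [D, Matrix.conjTranspose_apply, Matrix.diagonal_apply_ne, h, h.symm]
      simp only [Matrix.conjTranspose_mul, Matrix.conjTranspose_conjTranspose, hD,
        Matrix.mul_assoc]
    conv_lhs => rw [← hH]
    rfl
  have hre : (Matrix.trace (N * (1 - Srr) * N * Srr)).re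
      = ∑ j, ∑ k, Complex.normSq (N j k) * (1 - rvals k) * rvals j := by
    rw [Matrix.trace]
    have hdiag : ∀ j, (N * (1 - Srr) * N * Srr) j j
        = ∑ k, (Complex.normSq (N j k) : ℂ) * ((1 - rvals k : ℝ) : ℂ) * ((rvals j : ℝ) : ℂ) := by
      intro j
      rw [show N * (1 - Srr) * N * Srr = (N * (1 - Srr) * N) * Srr by noncomm_ring]
      rw [Matrix.mul_diagonal]
      rw [show N * (1 - Srr) * N = (N * (1 - Srr)) * N by noncomm_ring, Matrix.mul_apply,
        Finset.sum_mul]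
      congr 1; funext k
      rw [hsub, Matrix.mul_diagonal, hNconj j k]
      rw [show N j k * ((1 - rvals k : ℝ) : ℂ) * starRingEnd ℂ (N j k) * (rvals j : ℂ)
        = (N j k * starRingEnd ℂ (N j k)) * ((1 - rvals k : ℝ) : ℂ) * ((rvals j : ℝ) : ℂ) by ring]
      rw [Complex.mul_conj]
    simp only [Matrix.diag_apply, hdiag]
    push_cast
    simp [Complex.re_sum]
  -- inequality 2
  have hterm_nonneg : ∀ j k, 0 ≤ Complex.normSq (N j k) * (1 - rvals k) * rvals j := by
    intro j k
    have h1 := Complex.normSq_nonneg (N j k)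
    have h2 : (0:ℝ) ≤ 1 - rvals k := by linarith [hrv1 k]
    exact mul_nonneg (mul_nonneg h1 h2) (hrv0 j)
  have ineq2 : (Matrix.trace (N * (1 - Srr) * N * Srr)).re
      ≥ ∑ j, rvals j * (1 - rvals j) * (N j j).re ^ 2 := by
    rw [hre]
    apply Finset.sum_le_sum
    intro j _
    calc rvals j * (1 - rvals j) * (N j j).re ^ 2
        ≤ Complex.normSq (N j j) * (1 - rvals j) * rvals j := by
          have h1 : (N j j).re ^ 2 ≤ Complex.normSq (N j j) := by
            rw [Complex.normSq_apply]; nlinarith [sq_nonneg (N j j).im]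
          have h2 : 0 ≤ rvals j * (1 - rvals j) := by
            have := hrv0 j; have := hrv1 j; nlinarith
          nlinarith [h1, h2, hrv0 j, hrv1 j, Complex.normSq_nonneg (N j j)]
      _ ≤ ∑ k, Complex.normSq (N j k) * (1 - rvals k) * rvals j := by
          exact Finset.single_le_sum (fun k _ => hterm_nonneg j k) (Finset.mem_univ j)
  -- inequality 3
  have hne : Nonempty (Fin r) := ⟨⟨0, hr⟩⟩
  obtain ⟨i0, hi0⟩ := Finite.exists_min d
  have hinf : (⨅ j, d j) = d i0 :=
    le_antisymm (ciInf_le (Finite.bddBelow_range d) i0) (le_ciInf hi0)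
  have hNjj : ∀ j, (N j j).re = ∑ i, d i * Complex.normSq (T₁ i j) := by
    intro j
    have : N j j = ∑ i, ((d i : ℂ) * Complex.normSq (T₁ i j)) := by
      show (T₁ᴴ * D * T₁) j j = _
      rw [Matrix.mul_apply]
      congr 1; funext i
      rw [show T₁ᴴ * D = T₁ᴴ * Matrix.diagonal (fun j => (d j : ℂ)) from rfl,
        Matrix.mul_diagonal, Matrix.conjTranspose_apply]
      rw [show star (T₁ i j) * (d i : ℂ) * T₁ i j
        = (d i : ℂ) * (T₁ i j * starRingEnd ℂ (T₁ i j)) by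
          simp only [Complex.star_def]; ring, Complex.mul_conj]
    rw [this]
    simp [Complex.re_sum]
  have hcol : ∀ j, (∑ i, Complex.normSq (T₁ i j)) = 1 := by
    intro j
    have := congrFun (congrFun h2 j) j
    rw [Matrix.mul_apply] at this
    simp only [Matrix.one_apply_eq] at this
    have : (∑ i, (T₁ᴴ) j i * T₁ i j) = 1 := this
    have h3 : (∑ i, ((Complex.normSq (T₁ i j) : ℝ) : ℂ)) = 1 := by
      rw [← this]
      congr 1; funext i
      rw [Matrix.conjTranspose_apply, show star (T₁ i j) * T₁ i j
        = T₁ i j * starRingEnd ℂ (T₁ i j) by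
          simp only [Complex.star_def]; ring, Complex.mul_conj]
    have := congrArg Complex.re h3
    simpa [Complex.re_sum] using this
  have hNge : ∀ j, d i0 ≤ (N j j).re := by
    intro j
    rw [hNjj j]
    calc d i0 = ∑ i, d i0 * Complex.normSq (T₁ i j) := by
          rw [← Finset.mul_sum, hcol j, mul_one]
      _ ≤ ∑ i, d i * Complex.normSq (T₁ i j) := by
          apply Finset.sum_le_sum
          intro i _
          exact mul_le_mul_of_nonneg_right (hi0 i) (Complex.normSq_nonneg _)
  have ineq3 : (∑ j, rvals j * (1 - rvals j) * (N j j).re ^ 2)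
      ≥ (⨅ j, d j) ^ 2 * ∑ j, rvals j * (1 - rvals j) := by
    rw [hinf, Finset.mul_sum]
    apply Finset.sum_le_sum
    intro j _
    have h2 : 0 ≤ rvals j * (1 - rvals j) := by
      have := hrv0 j; have := hrv1 j; nlinarith
    have h3 : d i0 ^ 2 ≤ (N j j).re ^ 2 := by
      have := hNge j; nlinarith [le_of_lt (hd i0)]
    calc d i0 ^ 2 * (rvals j * (1 - rvals j))
        ≤ (N j j).re ^ 2 * (rvals j * (1 - rvals j)) :=
          mul_le_mul_of_nonneg_right h3 h2
      _ = rvals j * (1 - rvals j) * (N j j).re ^ 2 := by ring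
  exact ⟨htr, by rw [htr]; exact ineq2, ineq3⟩
end
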